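/- arXiv:1509.08781 — 3 statements merged into one kernel-verified Lean document; each statement's English description precedes it below -/
import Mathlib

section
/- Let A₁, A₂ be invertible 2×2 real matrices with ‖A₁‖ < 1 and ‖A₂‖ < 1, let q > 1, p ∈ (0,1), and s > 0, and write p₁ := p, p₂ := 1−p. Then the limit R_q(A₁, A₂, p, s) := lim_{n→∞} (1/n) · log( Σ_{i₁,…,i_n ∈ {1,2}} φ^s(A_{i₁}⋯A_{i_n})^{1−q} p_{i₁}^q ⋯ p_{i_n}^q ) exists and is a finite real number. -/
/-!
For invertible `2 × 2` matrices, `φ^s(A) = ‖A‖^a |det A|^b` with exponents `a, b ≥ 0`,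
`a + 2b = s`, because `σ₁(A) = ‖A‖` and `σ₁(A) σ₂(A) = |det A|`. Both factors are
submultiplicative, hence so is `φ^s`; as `1 - q < 0` and the weights `p_{i₁}^q ⋯ p_{i_n}^q` are
multiplicative along concatenation of words, the sums `Z_n` are supermultiplicative and
`-log Z_n` is subadditive. The bound `φ^s(A) ≥ |det A|^{s/2}` gives `Z_n ≤ C^n`, so
`-log Z_n / n` is bounded below and Fekete's lemma yields the limit.
-/

open MeasureTheory Filter Topology

noncomputable section

/-- The operator norm of a `d × d` real matrix induced by the Euclidean norm on `ℝ^d`. -/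
noncomputable def opNorm {d : ℕ} (A : Matrix (Fin d) (Fin d) ℝ) : ℝ :=
  ‖Matrix.toEuclideanCLM (𝕜 := ℝ) (n := Fin d) A‖

/-- The singular values of a `d × d` real matrix, in decreasing order:
`singularValues A j` is `σ_{j+1}(A)`, the `(j+1)`-st largest singular value. -/
noncomputable def singularValues {d : ℕ} (A : Matrix (Fin d) (Fin d) ℝ) : Fin d → ℝ :=
  fun j =>
    (fun i => Real.sqrt ((Matrix.isHermitian_conjTranspose_mul_self A).eigenvalues i))
      (Tuple.sort (fun i => Real.sqrt ((Matrix.isHermitian_conjTranspose_mul_self A).eigenvalues i))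
        (Fin.rev j))

/-- The singular value function `φ^s(A)`. -/
noncomputable def svf {d : ℕ} (s : ℝ) (A : Matrix (Fin d) (Fin d) ℝ) : ℝ :=
  if (d : ℝ) ≤ s then |A.det| ^ (s / d)
  else ∏ i : Fin d,
    if (i : ℕ) < ⌊s⌋₊ then singularValues A i
    else if (i : ℕ) = ⌊s⌋₊ then singularValues A i ^ (s - (⌊s⌋₊ : ℝ))
    else 1

/-- The product `A_{w 0} ⋯ A_{w (n-1)}` of matrices along the word `w`. -/
noncomputable def wordProd {d n : ℕ} (A : Fin 2 → Matrix (Fin d) (Fin d) ℝ)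
    (w : Fin n → Fin 2) : Matrix (Fin d) (Fin d) ℝ :=
  (List.ofFn fun j => A (w j)).prod

/-- The probability vector `(p, 1-p)`. -/
noncomputable def pvec (p : ℝ) : Fin 2 → ℝ := ![p, 1 - p]

/-- `Σ_{i₁,…,i_n ∈ {1,2}} φ^s(A_{i₁}⋯A_{i_n})^{1−q} p_{i₁}^q ⋯ p_{i_n}^q`. -/
noncomputable def Zsum (A : Fin 2 → Matrix (Fin 2) (Fin 2) ℝ) (p q s : ℝ) (n : ℕ) : ℝ :=
  ∑ w : Fin n → Fin 2,
    svf s (wordProd A w) ^ (1 - q) * ∏ j : Fin n, pvec p (w j) ^ q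

/-- `𝔯_q(A₁, A₂, p)`. -/
noncomputable def rqDim (A : Fin 2 → Matrix (Fin 2) (Fin 2) ℝ) (p q : ℝ) : ℝ :=
  sSup {s : ℝ | 0 < s ∧ Summable (fun n : ℕ => Zsum A p q s (n + 1))}

/-- `R_q(A₁, A₂, p, s)`. -/
noncomputable def Rq (A : Fin 2 → Matrix (Fin 2) (Fin 2) ℝ) (p q s : ℝ) : ℝ :=
  limUnder atTop (fun n : ℕ => (1 / (n : ℝ)) * Real.log (Zsum A p q s n))

/-- The minimum over all words of length `n` of the norm of the corresponding product. -/
noncomputable def minNormProd (A : Fin 2 → Matrix (Fin 2) (Fin 2) ℝ) (n : ℕ) : ℝ :=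
  ⨅ w : Fin n → Fin 2, opNorm (wordProd A w)

/-- The lower spectral radius `ϱ̲(A₁, A₂)`. -/
noncomputable def lsr (A : Fin 2 → Matrix (Fin 2) (Fin 2) ℝ) : ℝ :=
  limUnder atTop (fun n : ℕ => minNormProd A n ^ (1 / (n : ℝ)))

/-- Pairs of invertible `2 × 2` matrices of operator norm less than one. -/
def validPair : Set (Matrix (Fin 2) (Fin 2) ℝ × Matrix (Fin 2) (Fin 2) ℝ) :=
  {B | IsUnit B.1 ∧ IsUnit B.2 ∧ opNorm B.1 < 1 ∧ opNorm B.2 < 1}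

/-- Rotation of `ℝ²` about the origin through angle `θ`. -/
noncomputable def rot (θ : ℝ) : Matrix (Fin 2) (Fin 2) ℝ :=
  !![Real.cos θ, -Real.sin θ; Real.sin θ, Real.cos θ]

/-- `(A₁, A₂)` is `(c, ε, λ)`-resistant. -/
def ResistantWith (c ε lam : ℝ) (A : Fin 2 → Matrix (Fin 2) (Fin 2) ℝ) : Prop :=
  ∀ n : ℕ, 1 ≤ n → ∀ w : Fin n → Fin 2,
    ((Finset.univ.filter fun j => w j = 1).card : ℝ) ≤ ε * n →
    c * lam ^ n ≤ opNorm (wordProd A w)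

/-- `(A₁, A₂)` is resistant. -/
def Resistant (A : Fin 2 → Matrix (Fin 2) (Fin 2) ℝ) : Prop :=
  ∃ c > (0:ℝ), ∃ ε > (0:ℝ), ∃ lam > (1:ℝ), ResistantWith c ε lam A

/-- `ℋ`: `2 × 2` real matrices of determinant one with two unequal real eigenvalues. -/
def Hset : Set (Matrix (Fin 2) (Fin 2) ℝ) :=
  {H | H.det = 1 ∧ ∃ a b : ℝ, a ≠ b ∧ H.charpoly.IsRoot a ∧ H.charpoly.IsRoot b}

/-- `ℰ`: `2 × 2` real matrices of determinant one with non-real eigenvalues. -/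
def Eset : Set (Matrix (Fin 2) (Fin 2) ℝ) :=
  {R | R.det = 1 ∧ ∀ x : ℝ, ¬ R.charpoly.IsRoot x}


/-- Abbreviation for the space of `2 × 2` real matrices. -/
abbrev Mat2 := Matrix (Fin 2) (Fin 2) ℝ

open Matrix

theorem Tuple.apply_sort_fin_two {α : Type*} [LinearOrder α] (g : Fin 2 → α) :
    g (Tuple.sort g 0) = min (g 0) (g 1) ∧ g (Tuple.sort g 1) = max (g 0) (g 1) := by
  have hle : g (Tuple.sort g 0) ≤ g (Tuple.sort g 1) := Tuple.monotone_sort g (by decide)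
  have hperm : ∀ σ : Equiv.Perm (Fin 2), (σ 0 = 0 ∧ σ 1 = 1) ∨ (σ 0 = 1 ∧ σ 1 = 0) := by
    decide
  rcases hperm (Tuple.sort g) with ⟨h0, h1⟩ | ⟨h0, h1⟩ <;> rw [h0, h1] at hle ⊢
  · exact ⟨(min_eq_left hle).symm, (max_eq_right hle).symm⟩
  · exact ⟨(min_eq_right hle).symm, (max_eq_left hle).symm⟩

section SingularValues

variable {d : ℕ}

open scoped Matrix.Norms.L2Operator in
theorem opNorm_sq_eq_norm_eigenvalues (A : Matrix (Fin d) (Fin d) ℝ) :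
    opNorm A ^ 2 = ‖(isHermitian_conjTranspose_mul_self A).eigenvalues‖ := by
  have hA := isHermitian_conjTranspose_mul_self A
  rw [opNorm, ← cstar_norm_def, sq, ← l2_opNorm_conjTranspose_mul_self]
  conv_lhs => rw [hA.spectral_theorem, Unitary.conjStarAlgAut_apply, mul_assoc,
    CStarRing.norm_coe_unitary_mul,
    CStarRing.norm_mul_mem_unitary _ (Unitary.star_mem (SetLike.coe_mem _)), l2_opNorm_diagonal]
  rfl

theorem prod_eigenvalues_conjTranspose_mul_self (A : Matrix (Fin d) (Fin d) ℝ) :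
    ∏ i, (isHermitian_conjTranspose_mul_self A).eigenvalues i = A.det ^ 2 := by
  have h := (isHermitian_conjTranspose_mul_self A).det_eq_prod_eigenvalues
  simp only [det_mul, det_conjTranspose, star_trivial, RCLike.ofReal_real_eq_id, id] at h
  rw [← h, sq]

theorem opNorm_nonneg (A : Matrix (Fin d) (Fin d) ℝ) : 0 ≤ opNorm A := norm_nonneg _

theorem opNorm_mul_le (A B : Matrix (Fin d) (Fin d) ℝ) :
    opNorm (A * B) ≤ opNorm A * opNorm B := by
  rw [opNorm, opNorm, opNorm, map_mul]
  exact norm_mul_le _ _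

variable (A : Mat2)

theorem singularValues_fin_two :
    singularValues A 0 = max √((isHermitian_conjTranspose_mul_self A).eigenvalues 0)
        √((isHermitian_conjTranspose_mul_self A).eigenvalues 1) ∧
      singularValues A 1 = min √((isHermitian_conjTranspose_mul_self A).eigenvalues 0)
        √((isHermitian_conjTranspose_mul_self A).eigenvalues 1) :=
  have h := Tuple.apply_sort_fin_two
    fun i => √((isHermitian_conjTranspose_mul_self A).eigenvalues i)
  ⟨h.2, h.1⟩

theorem singularValues_zero_fin_two : singularValues A 0 = opNorm A := by
  set ev := (isHermitian_conjTranspose_mul_self A).eigenvalues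
  have hev : ∀ i, 0 ≤ ev i := eigenvalues_conjTranspose_mul_self_nonneg A
  have hnorm : ‖ev‖ = max (ev 0) (ev 1) := by
    refine le_antisymm ((pi_norm_le_iff_of_nonneg (le_max_of_le_left (hev 0))).2 ?_)
      (max_le ((le_abs_self _).trans (norm_le_pi_norm ev 0))
        ((le_abs_self _).trans (norm_le_pi_norm ev 1)))
    simp only [Fin.forall_fin_two, Real.norm_of_nonneg (hev _)]
    exact ⟨le_max_left _ _, le_max_right _ _⟩
  rw [(singularValues_fin_two A).1, ← Real.sqrt_monotone.map_max, ← hnorm,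
    ← opNorm_sq_eq_norm_eigenvalues, Real.sqrt_sq (opNorm_nonneg A)]

theorem singularValues_zero_mul_one_fin_two :
    singularValues A 0 * singularValues A 1 = |A.det| := by
  rw [(singularValues_fin_two A).1, (singularValues_fin_two A).2, max_mul_min,
    ← Real.sqrt_mul (eigenvalues_conjTranspose_mul_self_nonneg A 0), ← Fin.prod_univ_two,
    prod_eigenvalues_conjTranspose_mul_self, Real.sqrt_sq_eq_abs]

theorem singularValues_one_le_zero_fin_two : singularValues A 1 ≤ singularValues A 0 := by
  rw [(singularValues_fin_two A).1, (singularValues_fin_two A).2]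
  exact min_le_max

theorem singularValues_nonneg_fin_two (i : Fin 2) : 0 ≤ singularValues A i := by
  fin_cases i
  · exact (singularValues_fin_two A).1 ▸ le_max_of_le_left (Real.sqrt_nonneg _)
  · exact (singularValues_fin_two A).2 ▸ le_min (Real.sqrt_nonneg _) (Real.sqrt_nonneg _)

theorem abs_det_le_opNorm_sq : |A.det| ≤ opNorm A ^ 2 := by
  rw [← singularValues_zero_mul_one_fin_two, ← singularValues_zero_fin_two, sq]
  exact mul_le_mul_of_nonneg_left (singularValues_one_le_zero_fin_two A)
    (singularValues_nonneg_fin_two A 0)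

end SingularValues

section SingularValueFunction

-- The exponents `(a, b)` with `φ^s(A) = ‖A‖^a |det A|^b`, i.e. `(s, 0)`, `(2 - s, s - 1)` and
-- `(0, s / 2)` on `[0, 1]`, `[1, 2]` and `[2, ∞)`; always `a + 2b = s`.
def svfNormExp (s : ℝ) : ℝ := max 0 (min s (2 - s))

def svfDetExp (s : ℝ) : ℝ := (s - svfNormExp s) / 2

theorem svfNormExp_nonneg (s : ℝ) : 0 ≤ svfNormExp s := le_max_left _ _

variable {A B : Mat2} {s : ℝ}

theorem svf_eq_opNorm_rpow_mul_abs_det_rpow (hA : A.det ≠ 0) (hs : 0 ≤ s) :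
    svf s A = opNorm A ^ svfNormExp s * |A.det| ^ svfDetExp s := by
  have hprod := singularValues_zero_mul_one_fin_two A
  rw [singularValues_zero_fin_two] at hprod
  unfold svf svfDetExp svfNormExp
  rcases le_or_gt 2 s with h2 | h2
  · rw [if_pos (by push_cast; linarith), min_eq_right (by linarith), max_eq_left (by linarith),
      Real.rpow_zero, one_mul]
    simp only [Nat.cast_ofNat, sub_zero]
  rw [if_neg (by push_cast; linarith), Fin.prod_univ_two]
  rcases le_or_gt 1 s with h1 | h1
  · have hfloor : ⌊s⌋₊ = 1 := by
      rw [Nat.floor_eq_iff hs]; push_cast; constructor <;> linarith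
    have hnorm : 0 < opNorm A :=
      pos_of_mul_pos_left (hprod ▸ abs_pos.2 hA) (singularValues_nonneg_fin_two A 1)
    simp only [hfloor, Fin.val_zero, Fin.val_one, singularValues_zero_fin_two, Order.lt_one_iff,
      ↓reduceIte, lt_self_iff_false, Nat.cast_one]
    rw [min_eq_right (by linarith), max_eq_right (by linarith), ← hprod,
      Real.mul_rpow hnorm.le (singularValues_nonneg_fin_two A 1), ← mul_assoc,
      ← Real.rpow_add hnorm,
      show 2 - s + (s - (2 - s)) / 2 = 1 by ring, show (s - (2 - s)) / 2 = s - 1 by ring,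
      Real.rpow_one]
  · have hfloor : ⌊s⌋₊ = 0 := Nat.floor_eq_zero.2 h1
    simp only [hfloor, Fin.val_zero, Fin.val_one, singularValues_zero_fin_two, lt_self_iff_false,
      ↓reduceIte, CharP.cast_eq_zero, sub_zero, not_lt_zero, one_ne_zero, mul_one]
    rw [min_eq_left (by linarith), max_eq_right hs, sub_self, zero_div, Real.rpow_zero, mul_one]

theorem svf_mul_le (hA : A.det ≠ 0) (hB : B.det ≠ 0) (hs : 0 ≤ s) :
    svf s (A * B) ≤ svf s A * svf s B := by
  have hAB : (A * B).det ≠ 0 := by rw [det_mul]; exact mul_ne_zero hA hB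
  rw [svf_eq_opNorm_rpow_mul_abs_det_rpow hA hs, svf_eq_opNorm_rpow_mul_abs_det_rpow hB hs,
    svf_eq_opNorm_rpow_mul_abs_det_rpow hAB hs, det_mul, abs_mul,
    Real.mul_rpow (abs_nonneg _) (abs_nonneg _)]
  calc opNorm (A * B) ^ svfNormExp s * (|A.det| ^ svfDetExp s * |B.det| ^ svfDetExp s)
      ≤ (opNorm A * opNorm B) ^ svfNormExp s *
          (|A.det| ^ svfDetExp s * |B.det| ^ svfDetExp s) := by
        gcongr
        · exact opNorm_nonneg _
        · exact svfNormExp_nonneg s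
        · exact opNorm_mul_le A B
    _ = _ := by rw [Real.mul_rpow (opNorm_nonneg A) (opNorm_nonneg B)]; ring

theorem abs_det_rpow_le_svf (hA : A.det ≠ 0) (hs : 0 ≤ s) : |A.det| ^ (s / 2) ≤ svf s A := by
  have hdet := abs_pos.2 hA
  have hsqrt : |A.det| ^ (1 / 2 : ℝ) ≤ opNorm A := by
    rw [← Real.sqrt_eq_rpow, Real.sqrt_le_left (opNorm_nonneg A)]
    exact abs_det_le_opNorm_sq A
  calc |A.det| ^ (s / 2) = (|A.det| ^ (1 / 2 : ℝ)) ^ svfNormExp s * |A.det| ^ svfDetExp s := by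
        rw [← Real.rpow_mul hdet.le, ← Real.rpow_add hdet, svfDetExp]; ring_nf
    _ ≤ opNorm A ^ svfNormExp s * |A.det| ^ svfDetExp s := by
        gcongr
        exact svfNormExp_nonneg s
    _ = svf s A := (svf_eq_opNorm_rpow_mul_abs_det_rpow hA hs).symm

theorem svf_pos (hA : A.det ≠ 0) (hs : 0 ≤ s) : 0 < svf s A :=
  (Real.rpow_pos_of_pos (abs_pos.2 hA) _).trans_le (abs_det_rpow_le_svf hA hs)

end SingularValueFunction

section Words

variable {d : ℕ} (A : Fin 2 → Matrix (Fin d) (Fin d) ℝ)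

theorem wordProd_append {m n : ℕ} (u : Fin m → Fin 2) (v : Fin n → Fin 2) :
    wordProd A (Fin.append u v) = wordProd A u * wordProd A v := by
  simp [wordProd, List.ofFn_add]

theorem det_wordProd {n : ℕ} (w : Fin n → Fin 2) :
    (wordProd A w).det = ∏ j, (A (w j)).det := by
  rw [wordProd, ← coe_detMonoidHom, map_list_prod, List.map_ofFn, List.prod_ofFn]
  rfl

theorem det_wordProd_ne_zero (hA : ∀ i, (A i).det ≠ 0) {n : ℕ} (w : Fin n → Fin 2) :
    (wordProd A w).det ≠ 0 := by
  rw [det_wordProd]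
  exact Finset.prod_ne_zero_iff.2 fun j _ => hA (w j)

end Words

theorem pvec_pos {p : ℝ} (hp : p ∈ Set.Ioo 0 1) (i : Fin 2) : 0 < pvec p i := by
  fin_cases i <;> simp [pvec] <;> linarith [hp.1, hp.2]

theorem pvec_mem_Icc {p : ℝ} (hp : p ∈ Set.Icc 0 1) (i : Fin 2) : pvec p i ∈ Set.Icc 0 1 := by
  fin_cases i <;> simp [pvec] <;> constructor <;> linarith [hp.1, hp.2]

section WeightedSums

variable (A : Fin 2 → Mat2) (p q s : ℝ)

def wordWeight {n : ℕ} (w : Fin n → Fin 2) : ℝ :=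
  svf s (wordProd A w) ^ (1 - q) * ∏ j, pvec p (w j) ^ q

theorem Zsum_eq_sum_wordWeight (n : ℕ) :
    Zsum A p q s n = ∑ w : Fin n → Fin 2, wordWeight A p q s w := rfl

variable {A p q s}

theorem Zsum_pos (hA : ∀ i, (A i).det ≠ 0) (hs : 0 ≤ s) (hp : p ∈ Set.Ioo 0 1) (n : ℕ) :
    0 < Zsum A p q s n :=
  Finset.sum_pos
    (fun w _ => mul_pos (Real.rpow_pos_of_pos (svf_pos (det_wordProd_ne_zero A hA w) hs) _)
      (Finset.prod_pos fun _ _ => Real.rpow_pos_of_pos (pvec_pos hp _) _))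
    Finset.univ_nonempty

theorem wordWeight_mul_le_wordWeight_append (hA : ∀ i, (A i).det ≠ 0) (hs : 0 ≤ s)
    (hq : 1 ≤ q) (hp : p ∈ Set.Icc 0 1) {m n : ℕ} (u : Fin m → Fin 2)
    (v : Fin n → Fin 2) :
    wordWeight A p q s u * wordWeight A p q s v ≤ wordWeight A p q s (Fin.append u v) := by
  have hu := svf_pos (det_wordProd_ne_zero A hA u) hs
  have hv := svf_pos (det_wordProd_ne_zero A hA v) hs
  have hsvf : svf s (wordProd A u) ^ (1 - q) * svf s (wordProd A v) ^ (1 - q) ≤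
      svf s (wordProd A (Fin.append u v)) ^ (1 - q) := by
    rw [← Real.mul_rpow hu.le hv.le]
    refine Real.rpow_le_rpow_of_nonpos (svf_pos (det_wordProd_ne_zero A hA _) hs) ?_
      (by linarith)
    rw [wordProd_append]
    exact svf_mul_le (det_wordProd_ne_zero A hA u) (det_wordProd_ne_zero A hA v) hs
  have hweights : ∏ j, pvec p (Fin.append u v j) ^ q =
      (∏ j, pvec p (u j) ^ q) * ∏ j, pvec p (v j) ^ q := by
    simp [Fin.prod_univ_add]
  have hnonneg : ∀ {k : ℕ} (x : Fin k → Fin 2), 0 ≤ ∏ j, pvec p (x j) ^ q := fun x =>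
    Finset.prod_nonneg fun _ _ => Real.rpow_nonneg (pvec_mem_Icc hp _).1 _
  rw [wordWeight, wordWeight, wordWeight, hweights, mul_mul_mul_comm]
  exact mul_le_mul_of_nonneg_right hsvf (mul_nonneg (hnonneg u) (hnonneg v))

theorem Zsum_mul_le_Zsum_add (hA : ∀ i, (A i).det ≠ 0) (hs : 0 ≤ s) (hq : 1 ≤ q)
    (hp : p ∈ Set.Icc 0 1) (m n : ℕ) :
    Zsum A p q s m * Zsum A p q s n ≤ Zsum A p q s (m + n) :=
  calc Zsum A p q s m * Zsum A p q s n
      = ∑ u : Fin m → Fin 2, ∑ v : Fin n → Fin 2,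
          wordWeight A p q s u * wordWeight A p q s v :=
        Finset.sum_mul_sum _ _ _ _
    _ ≤ ∑ u : Fin m → Fin 2, ∑ v : Fin n → Fin 2,
          wordWeight A p q s (Fin.append u v) := by
        gcongr with u _ v _
        exact wordWeight_mul_le_wordWeight_append hA hs hq hp u v
    _ = Zsum A p q s (m + n) := by
        rw [← Fintype.sum_prod_type', Zsum_eq_sum_wordWeight]
        exact (Fin.appendEquiv m n).sum_comp (wordWeight A p q s)

theorem wordWeight_le_prod (hA : ∀ i, (A i).det ≠ 0) (hs : 0 ≤ s) (hq : 1 ≤ q)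
    (hp : p ∈ Set.Icc 0 1) {n : ℕ} (w : Fin n → Fin 2) :
    wordWeight A p q s w ≤ ∏ j, |(A (w j)).det| ^ (s / 2 * (1 - q)) := by
  have hdet := det_wordProd_ne_zero A hA w
  calc wordWeight A p q s w ≤ svf s (wordProd A w) ^ (1 - q) :=
        mul_le_of_le_one_right (Real.rpow_nonneg (svf_pos hdet hs).le _)
          (Finset.prod_le_one (fun _ _ => Real.rpow_nonneg (pvec_mem_Icc hp _).1 _) fun _ _ =>
            Real.rpow_le_one (pvec_mem_Icc hp _).1 (pvec_mem_Icc hp _).2 (by linarith))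
    _ ≤ (|(wordProd A w).det| ^ (s / 2)) ^ (1 - q) :=
        Real.rpow_le_rpow_of_nonpos (Real.rpow_pos_of_pos (abs_pos.2 hdet) _)
          (abs_det_rpow_le_svf hdet hs) (by linarith)
    _ = ∏ j, |(A (w j)).det| ^ (s / 2 * (1 - q)) := by
        rw [← Real.rpow_mul (abs_nonneg _), det_wordProd, Finset.abs_prod,
          Real.finsetProd_rpow _ _ fun _ _ => abs_nonneg _]

theorem Zsum_le_pow (hA : ∀ i, (A i).det ≠ 0) (hs : 0 ≤ s) (hq : 1 ≤ q)
    (hp : p ∈ Set.Icc 0 1) (n : ℕ) :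
    Zsum A p q s n ≤ (∑ i, |(A i).det| ^ (s / 2 * (1 - q))) ^ n := by
  rw [Finset.sum_pow', Fintype.piFinset_univ, Zsum_eq_sum_wordWeight]
  exact Finset.sum_le_sum fun w _ => wordWeight_le_prod hA hs hq hp w

end WeightedSums

theorem exists_tendsto_log_div_of_supermul {Z : ℕ → ℝ} {C : ℝ} (hpos : ∀ n, 0 < Z n)
    (hmul : ∀ m n, Z m * Z n ≤ Z (m + n)) (hle : ∀ n, Z n ≤ C ^ n) :
    ∃ L, Tendsto (fun n : ℕ => 1 / (n : ℝ) * Real.log (Z n)) atTop (𝓝 L) := by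
  have hsub : Subadditive fun n => -Real.log (Z n) := fun m n => by
    have := Real.log_le_log (mul_pos (hpos m) (hpos n)) (hmul m n)
    rw [Real.log_mul (hpos m).ne' (hpos n).ne'] at this
    linarith
  have hbdd : BddBelow (Set.range fun n : ℕ => -Real.log (Z n) / n) := by
    refine ⟨min 0 (-Real.log C), ?_⟩
    rintro _ ⟨n, rfl⟩
    rcases Nat.eq_zero_or_pos n with rfl | hn
    · simp
    have hlog : Real.log (Z n) ≤ n * Real.log C := by
      rw [← Real.log_pow]
      exact Real.log_le_log (hpos n) (hle n)
    refine (min_le_right _ _).trans ?_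
    rw [le_div_iff₀ (by exact_mod_cast hn)]
    linarith
  refine ⟨-hsub.lim, ?_⟩
  convert (hsub.tendsto_lim hbdd).neg using 2 with n
  rw [neg_div, neg_neg, one_div, inv_mul_eq_div]

theorem stmt3_general (A₁ A₂ : Mat2) (h1 : IsUnit A₁) (h2 : IsUnit A₂)
    (q p s : ℝ) (hq : 1 < q) (hp : p ∈ Set.Ioo (0 : ℝ) 1) (hs : 0 < s) :
    ∃ L : ℝ, Filter.Tendsto (fun n : ℕ => (1 / (n : ℝ)) * Real.log (Zsum ![A₁, A₂] p q s n))
      Filter.atTop (𝓝 L) := by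
  have hA : ∀ i, (![A₁, A₂] i).det ≠ 0 := Fin.forall_fin_two.2
    ⟨((isUnit_iff_isUnit_det A₁).1 h1).ne_zero, ((isUnit_iff_isUnit_det A₂).1 h2).ne_zero⟩
  have hp' := Set.Ioo_subset_Icc_self hp
  exact exists_tendsto_log_div_of_supermul (Zsum_pos hA hs.le hp)
    (Zsum_mul_le_Zsum_add hA hs.le hq.le hp') (Zsum_le_pow hA hs.le hq.le hp')

/-- Existence (and finiteness) of the limit defining `R_q(A₁,A₂,p,s)`. -/
theorem stmt3 (A₁ A₂ : Mat2) (h1 : IsUnit A₁) (h2 : IsUnit A₂)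
    (hn1 : opNorm A₁ < 1) (hn2 : opNorm A₂ < 1)
    (q p s : ℝ) (hq : 1 < q) (hp : p ∈ Set.Ioo (0 : ℝ) 1) (hs : 0 < s) :
    ∃ L : ℝ, Filter.Tendsto (fun n : ℕ => (1 / (n : ℝ)) * Real.log (Zsum ![A₁, A₂] p q s n))
      Filter.atTop (𝓝 L) :=
  stmt3_general A₁ A₂ h1 h2 q p s hq hp hs
end
end

section
/- Let H be a 2×2 real matrix with determinant 1 and two unequal real eigenvalues, and let R be a 2×2 real matrix with determinant 1 and non-real eigenvalues. Then in every open neighbourhood of R there exists a 2×2 real matrix R' such that, for some integer k ≥ 1 depending on R', lim_{n→∞} ‖Hⁿ (R')ᵏ Hⁿ‖^{1/(2n+k)} = 1. -/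
open MeasureTheory Filter Topology

noncomputable section

/-!
Conjugate `H` to `diag(a, b)` with `a * b = 1`, `|b| < 1`, and write `R = cos θ + J sin θ`
with `J² = -1`. For every `α`, the angle `θ` is approximated by `θ' = (α + 2πm) / k` for large
`k`, and then `R' = cos θ' + J sin θ'` satisfies `R'ᵏ = cos α + J sin α`. Choose `α` so that in
the eigenbasis of `H` the `(0,0)` entry `N₀₀` of `R'ᵏ` vanishes. Conjugating by `diag(aⁿ, bⁿ)`
multiplies `N₀₀` by `a²ⁿ`, `N₁₁` by `b²ⁿ` and fixes the off-diagonal entries, so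
`Hⁿ R'ᵏ Hⁿ` converges to an invertible matrix; its norm has a positive limit, whose
`(2n + k)`-th root tends to `1`.
-/

section Hyperbolic

open Matrix Polynomial

theorem Matrix.exists_mul_eq_mul_diagonal_of_isRoot_charpoly {K n : Type*} [Field K] [Fintype n]
    [DecidableEq n] (M : Matrix n n K) {d : n → K} (hd : Function.Injective d)
    (hroot : ∀ i, M.charpoly.IsRoot (d i)) :
    ∃ S : Matrix n n K, IsUnit S ∧ M * S = S * diagonal d := by
  have hev (i : n) : Module.End.HasEigenvalue (toLin' M) (d i) := by
    rw [Module.End.hasEigenvalue_iff_isRoot_charpoly, Matrix.charpoly_toLin']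
    exact hroot i
  choose v hv using fun i => (hev i).exists_hasEigenvector
  refine ⟨(of v)ᵀ, ?_, ?_⟩
  · rw [← linearIndependent_cols_iff_isUnit]
    exact Module.End.eigenvectors_linearIndependent' _ d hd v hv
  · ext r i
    simpa [Matrix.mul_apply, mulVec, dotProduct, diagonal_apply, mul_comm] using
      congrFun (hv i).apply_eq_smul r

theorem Matrix.mul_eq_det_of_isRoot_charpoly_fin_two {K : Type*} [Field K]
    (M : Matrix (Fin 2) (Fin 2) K) {a b : K} (hab : a ≠ b) (ha : M.charpoly.IsRoot a)
    (hb : M.charpoly.IsRoot b) : a * b = M.det := by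
  simp only [IsRoot, charpoly_fin_two, eval_add, eval_sub, eval_pow, eval_mul, eval_X,
    eval_C] at ha hb
  have hsum : a + b = M.trace := by
    have : (a - b) * (a + b - M.trace) = 0 := by linear_combination ha - hb
    linear_combination (mul_eq_zero.1 this).resolve_left (sub_ne_zero.2 hab)
  linear_combination a * hsum - ha

theorem Matrix.injective_vecCons_fin_two {α : Type*} {a b : α} (hab : a ≠ b) :
    Function.Injective ![a, b] := by
  intro i j h
  fin_cases i <;> fin_cases j <;> simp_all [eq_comm]

theorem Matrix.exists_mul_eq_mul_diagonal_of_det_eq_one (H : Matrix (Fin 2) (Fin 2) ℝ)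
    (hdet : H.det = 1) {a b : ℝ} (hab : a ≠ b) (ha : H.charpoly.IsRoot a)
    (hb : H.charpoly.IsRoot b) :
    ∃ S : Matrix (Fin 2) (Fin 2) ℝ, IsUnit S ∧
      ∃ a b : ℝ, a * b = 1 ∧ |b| < 1 ∧ H * S = S * diagonal ![a, b] := by
  have hprod : a * b = 1 := hdet ▸ H.mul_eq_det_of_isRoot_charpoly_fin_two hab ha hb
  have hprod_abs : |a| * |b| = 1 := by rw [← abs_mul, hprod, abs_one]
  have hb_ne : |b| ≠ 1 := fun h => hab <| by
    rcases abs_eq_abs.1 (show |a| = |b| by nlinarith) with h' | h'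
    · exact h'
    · nlinarith [abs_mul_abs_self b]
  rcases hb_ne.lt_or_gt with hb1 | hb1
  · obtain ⟨S, hS, hHS⟩ := H.exists_mul_eq_mul_diagonal_of_isRoot_charpoly
      (injective_vecCons_fin_two hab) (Fin.forall_fin_two.2 ⟨ha, hb⟩)
    exact ⟨S, hS, a, b, hprod, hb1, hHS⟩
  · obtain ⟨S, hS, hHS⟩ := H.exists_mul_eq_mul_diagonal_of_isRoot_charpoly
      (injective_vecCons_fin_two hab.symm) (Fin.forall_fin_two.2 ⟨hb, ha⟩)
    exact ⟨S, hS, b, a, by rw [mul_comm, hprod], by nlinarith [abs_nonneg a], hHS⟩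

theorem Matrix.diagonal_pow_mul_mul_diagonal_pow {R : Type*} [CommRing R] {a b : R}
    (hab : a * b = 1) (N : Matrix (Fin 2) (Fin 2) R) (n : ℕ) :
    diagonal ![a, b] ^ n * N * diagonal ![a, b] ^ n =
      !![a ^ (2 * n) * N 0 0, N 0 1; N 1 0, b ^ (2 * n) * N 1 1] := by
  have habn : a ^ n * b ^ n = 1 := by rw [← mul_pow, hab, one_pow]
  ext i j
  fin_cases i <;> fin_cases j <;> simp [diagonal_pow, pow_mul']
  · ring
  · linear_combination N 0 1 * habn
  · linear_combination N 1 0 * habn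
  · ring

theorem Matrix.tendsto_diagonal_pow_mul_mul_diagonal_pow {a b : ℝ} (hab : a * b = 1)
    (hb : |b| < 1) {N : Matrix (Fin 2) (Fin 2) ℝ} (hN : N 0 0 = 0) :
    Tendsto (fun n : ℕ => diagonal ![a, b] ^ n * N * diagonal ![a, b] ^ n) atTop
      (𝓝 !![0, N 0 1; N 1 0, 0]) := by
  have hlim : Tendsto (fun n : ℕ => b ^ (2 * n)) atTop (𝓝 0) := by
    simpa only [pow_mul] using tendsto_pow_atTop_nhds_zero_of_abs_lt_one
      (by rwa [abs_pow, sq_lt_one_iff₀ (abs_nonneg b)] : |b ^ 2| < 1)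
  have hcont : Continuous fun t : ℝ => !![0, N 0 1; N 1 0, t * N 1 1] := by fun_prop
  simpa [Function.comp_def, diagonal_pow_mul_mul_diagonal_pow hab, hN] using
    (hcont.tendsto 0).comp hlim

theorem Matrix.exists_tendsto_pow_mul_mul_pow {H S N : Matrix (Fin 2) (Fin 2) ℝ} {a b : ℝ}
    (hS : IsUnit S) (hHS : H * S = S * diagonal ![a, b]) (hab : a * b = 1) (hb : |b| < 1)
    (hN : IsUnit N) (hN₀₀ : (S⁻¹ * N * S) 0 0 = 0) :
    ∃ L, IsUnit L ∧ Tendsto (fun n : ℕ => H ^ n * N * H ^ n) atTop (𝓝 L) := by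
  set N' := S⁻¹ * N * S
  have hHn (n : ℕ) : H ^ n = S * diagonal ![a, b] ^ n * S⁻¹ := by
    rw [((show SemiconjBy S (diagonal ![a, b]) H from hHS.symm).pow_right n).eq,
      mul_nonsing_inv_cancel_right _ _ ((isUnit_iff_isUnit_det S).1 hS)]
  have hA : IsUnit !![0, N' 0 1; N' 1 0, 0] := by
    have hN' : IsUnit N' := ((isUnit_nonsing_inv_iff.2 hS).mul hN).mul hS
    rw [isUnit_iff_isUnit_det, det_fin_two, hN₀₀] at hN'
    rw [isUnit_iff_isUnit_det, det_fin_two_of]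
    simpa using hN'
  refine ⟨S * !![0, N' 0 1; N' 1 0, 0] * S⁻¹, (hS.mul hA).mul (isUnit_nonsing_inv_iff.2 hS), ?_⟩
  have hconj : Continuous fun X : Matrix (Fin 2) (Fin 2) ℝ => S * X * S⁻¹ := by fun_prop
  refine ((hconj.tendsto _).comp (tendsto_diagonal_pow_mul_mul_diagonal_pow hab hb hN₀₀)).congr
    fun n => ?_
  simp only [Function.comp_apply, hHn, N', mul_assoc]

end Hyperbolic

section Elliptic

open Matrix Polynomial

variable {A : Type*} [Ring A] [Algebra ℝ A]

/-- With `J * J = -1`, `J` plays the role of `i` and `cis J α` that of `exp (i α)`. -/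
def cis (J : A) (α : ℝ) : A := Real.cos α • 1 + Real.sin α • J

variable {J : A}

theorem cis_zero (J : A) : cis J 0 = 1 := by simp [cis]

theorem cis_add (hJ : J * J = -1) (α β : ℝ) : cis J (α + β) = cis J α * cis J β := by
  simp only [cis, Real.cos_add, Real.sin_add, add_mul, mul_add, smul_mul_smul_comm, hJ, one_mul,
    mul_one]
  module

theorem cis_pow (hJ : J * J = -1) (α : ℝ) (n : ℕ) : cis J α ^ n = cis J (n * α) := by
  induction n with
  | zero => simp [cis_zero]
  | succ n ih => rw [pow_succ, ih, ← cis_add hJ]; push_cast; ring_nf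

theorem cis_add_int_mul_two_pi (J : A) (α : ℝ) (m : ℤ) :
    cis J (α + m * (2 * Real.pi)) = cis J α := by
  simp only [cis, Real.cos_add_int_mul_two_pi, Real.sin_add_int_mul_two_pi]

theorem isUnit_cis (hJ : J * J = -1) (α : ℝ) : IsUnit (cis J α) :=
  isUnit_iff_exists.2 ⟨cis J (-α), by rw [← cis_add hJ, add_neg_cancel, cis_zero],
    by rw [← cis_add hJ, neg_add_cancel, cis_zero]⟩

theorem continuous_cis [TopologicalSpace A] [ContinuousAdd A] [ContinuousSMul ℝ A] (J : A) :
    Continuous (cis J) := by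
  unfold cis; fun_prop

theorem Matrix.trace_sq_lt_four_of_forall_not_isRoot (R : Matrix (Fin 2) (Fin 2) ℝ)
    (hdet : R.det = 1) (hR : ∀ x : ℝ, ¬ R.charpoly.IsRoot x) : R.trace ^ 2 < 4 := by
  by_contra! h
  apply hR ((R.trace + √(R.trace ^ 2 - 4)) / 2)
  have hsq := Real.sq_sqrt (show 0 ≤ R.trace ^ 2 - 4 by linarith)
  simp only [IsRoot, charpoly_fin_two, eval_add, eval_sub, eval_pow, eval_mul, eval_X, eval_C,
    hdet]
  linear_combination hsq / 4

theorem Matrix.exists_eq_cis_of_forall_not_isRoot (R : Matrix (Fin 2) (Fin 2) ℝ)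
    (hdet : R.det = 1) (hR : ∀ x : ℝ, ¬ R.charpoly.IsRoot x) :
    ∃ J : Matrix (Fin 2) (Fin 2) ℝ, J * J = -1 ∧ ∃ θ, R = cis J θ := by
  set t := R.trace
  have ht := R.trace_sq_lt_four_of_forall_not_isRoot hdet hR
  set s := √(4 - t ^ 2) / 2
  have hs : 0 < s := by positivity
  have hs2 : s ^ 2 = 1 - (t / 2) ^ 2 := by
    rw [div_pow, Real.sq_sqrt (by linarith)]; ring
  have hCH : R * R = t • R - 1 := by
    have := R.aeval_self_charpoly
    simp only [charpoly_fin_two, hdet, map_add, map_sub, map_mul, aeval_X, aeval_C,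
      Algebra.algebraMap_eq_smul_one, pow_two, smul_one_mul, one_smul] at this
    calc R * R = (R * R - t • R + 1) + t • R - 1 := by abel
      _ = t • R - 1 := by rw [this, zero_add]
  refine ⟨s⁻¹ • (R - (t / 2) • 1), ?_, Real.arccos (t / 2), ?_⟩
  · have hsq : (R - (t / 2) • 1) * (R - (t / 2) • 1) = -s ^ 2 • (1 : Matrix (Fin 2) (Fin 2) ℝ) := by
      rw [hs2, sub_mul, mul_sub, mul_sub, hCH, mul_smul_comm, smul_mul_assoc, smul_mul_smul_comm,
        one_mul, mul_one, one_mul]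
      module
    rw [smul_mul_smul_comm, hsq, smul_smul, show s⁻¹ * s⁻¹ * -s ^ 2 = -1 by field_simp,
      neg_one_smul]
  · have hcos : Real.cos (Real.arccos (t / 2)) = t / 2 :=
      Real.cos_arccos (by nlinarith) (by nlinarith)
    have hsin : Real.sin (Real.arccos (t / 2)) = s := by
      rw [Real.sin_arccos, ← hs2, Real.sqrt_sq hs.le]
    rw [cis, hcos, hsin, smul_smul, mul_inv_cancel₀ hs.ne', one_smul]
    abel

theorem Matrix.nonsing_inv_mul_cis_mul {n : Type*} [Fintype n] [DecidableEq n]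
    {S : Matrix n n ℝ} (hS : IsUnit S) (J : Matrix n n ℝ) (α : ℝ) :
    S⁻¹ * cis J α * S = cis (S⁻¹ * J * S) α := by
  simp [cis, Matrix.mul_add, Matrix.add_mul, nonsing_inv_mul S ((isUnit_iff_isUnit_det S).1 hS)]

theorem Matrix.exists_cis_apply_self_eq_zero {n : Type*} [Fintype n] [DecidableEq n]
    (J : Matrix n n ℝ) (i : n) : ∃ α, cis J α i i = 0 := by
  refine ⟨Real.arctan (J i i) + Real.pi / 2, ?_⟩
  have htan := Real.tan_arctan (J i i)
  rw [Real.tan_eq_sin_div_cos, div_eq_iff (Real.cos_arctan_pos (J i i)).ne'] at htan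
  simp [cis, Real.cos_add_pi_div_two, Real.sin_add_pi_div_two]
  linear_combination -htan

theorem exists_nat_mul_eq_add_int_mul_near (θ α : ℝ) {p δ : ℝ} (hp : 0 < p) (hδ : 0 < δ) :
    ∃ k : ℕ, 1 ≤ k ∧ ∃ θ', |θ' - θ| < δ ∧ ∃ m : ℤ, k * θ' = α + m * p := by
  obtain ⟨k, hk⟩ := exists_nat_gt (p / δ)
  have hk0 : (0 : ℝ) < k := (div_pos hp hδ).trans hk
  set m := round ((k * θ - α) / p)
  refine ⟨k, by exact_mod_cast hk0, (α + m * p) / k, ?_, m, by field_simp⟩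
  have hdiff : (α + m * p) / k - θ = -(p / k) * ((k * θ - α) / p - m) := by field_simp; ring
  rw [hdiff, abs_mul, abs_neg, abs_of_pos (div_pos hp hk0)]
  rw [div_lt_iff₀ hδ] at hk
  calc p / k * |(k * θ - α) / p - m| ≤ p / k * (1 / 2) := by gcongr; exact abs_sub_round _
    _ < δ := by rw [div_mul_eq_mul_div, div_lt_iff₀ hk0]; nlinarith

theorem exists_cis_pow_eq_of_mem_nhds [TopologicalSpace A] [ContinuousAdd A]
    [ContinuousSMul ℝ A] (hJ : J * J = -1) {θ : ℝ} {U : Set A} (hU : U ∈ 𝓝 (cis J θ)) (α : ℝ) :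
    ∃ k : ℕ, 1 ≤ k ∧ ∃ θ', cis J θ' ∈ U ∧ cis J θ' ^ k = cis J α := by
  obtain ⟨δ, hδ, hball⟩ :=
    Metric.mem_nhds_iff.1 ((continuous_cis J).continuousAt.preimage_mem_nhds hU)
  obtain ⟨k, hk, θ', hθ', m, hkθ'⟩ := exists_nat_mul_eq_add_int_mul_near θ α Real.two_pi_pos hδ
  exact ⟨k, hk, θ', hball hθ', by rw [cis_pow hJ, hkθ', cis_add_int_mul_two_pi]⟩

end Elliptic

theorem continuous_opNorm (d : ℕ) : Continuous (opNorm (d := d)) :=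
  continuous_norm.comp <| LinearMap.continuous_of_finiteDimensional
    (Matrix.toEuclideanCLM (𝕜 := ℝ) (n := Fin d)).toAlgEquiv.toLinearMap

theorem opNorm_ne_zero {d : ℕ} {A : Matrix (Fin d) (Fin d) ℝ} (hA : A ≠ 0) : opNorm A ≠ 0 :=
  norm_ne_zero_iff.2 <| (map_ne_zero_iff _ Matrix.toEuclideanCLM.injective).2 hA

theorem tendsto_opNorm_rpow_one_div_two_mul_add {d : ℕ} {M : ℕ → Matrix (Fin d) (Fin d) ℝ}
    {L : Matrix (Fin d) (Fin d) ℝ} (hM : Tendsto M atTop (𝓝 L)) (hL : L ≠ 0) (k : ℝ) :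
    Tendsto (fun n : ℕ => opNorm (M n) ^ (1 / (2 * (n : ℝ) + k))) atTop (𝓝 1) := by
  have hexp : Tendsto (fun n : ℕ => 1 / (2 * (n : ℝ) + k)) atTop (𝓝 0) := by
    simp only [one_div]
    exact (tendsto_atTop_add_const_right _ k
      (tendsto_natCast_atTop_atTop.const_mul_atTop two_pos)).inv_tendsto_atTop
  simpa using ((continuous_opNorm d).tendsto L |>.comp hM).rpow hexp (.inl (opNorm_ne_zero hL))

/-- If `H` has determinant one and two unequal real eigenvalues and `R` has
determinant one and non-real eigenvalues, then every neighbourhood of `R` contains `R'` such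
that `lim_n ‖Hⁿ(R')ᵏHⁿ‖^{1/(2n+k)} = 1` for some integer `k ≥ 1`. -/
theorem stmt12 (H R : Mat2)
    (hH : H.det = 1 ∧ ∃ a b : ℝ, a ≠ b ∧ H.charpoly.IsRoot a ∧ H.charpoly.IsRoot b)
    (hR : R.det = 1 ∧ ∀ x : ℝ, ¬ R.charpoly.IsRoot x) :
    ∀ U ∈ 𝓝 R, ∃ R' ∈ U, ∃ k : ℕ, 1 ≤ k ∧
      Filter.Tendsto (fun n : ℕ => opNorm (H ^ n * R' ^ k * H ^ n) ^ (1 / (2 * (n : ℝ) + k)))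
        Filter.atTop (𝓝 1) := by
  intro U hU
  obtain ⟨hdetH, a₀, b₀, hne, ha₀, hb₀⟩ := hH
  obtain ⟨S, hS, a, b, hab, hb, hHS⟩ :=
    H.exists_mul_eq_mul_diagonal_of_det_eq_one hdetH hne ha₀ hb₀
  obtain ⟨J, hJ, θ, rfl⟩ := R.exists_eq_cis_of_forall_not_isRoot hR.1 hR.2
  obtain ⟨α, hα⟩ := (S⁻¹ * J * S).exists_cis_apply_self_eq_zero 0
  obtain ⟨k, hk, θ', hθ'U, hpow⟩ := exists_cis_pow_eq_of_mem_nhds hJ hU α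
  obtain ⟨L, hL, hlim⟩ := Matrix.exists_tendsto_pow_mul_mul_pow hS hHS hab hb (isUnit_cis hJ α)
    (by rwa [Matrix.nonsing_inv_mul_cis_mul hS])
  refine ⟨cis J θ', hθ'U, k, hk, ?_⟩
  rw [hpow]
  exact tendsto_opNorm_rpow_one_div_two_mul_add hlim hL.ne_zero k
end
end

section
/- Let ε, κ > 0 and set Q := 1 + κ/ε. Then for every p ∈ [1/2, 1) and every q > Q, one has (p^q + (1−p)^q)^{1/q} < p^{κ/(κ+ε)}; equivalently, log(p^q)/log(p^q + (1−p)^q) < 1 + ε/κ. -/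
open MeasureTheory Filter Topology

noncomputable section

/-! Since `1 - p ≤ p`, `p ^ q + (1 - p) ^ q ≤ p ^ (q - 1) * (p + (1 - p)) = p ^ (q - 1)`, and
`p ^ (q - 1) < p ^ (κ q / (κ + ε))` because `q - 1 > κ q / (κ + ε)` is exactly `q > 1 + κ / ε`.
Both claims follow by taking a `q`-th root, resp. a logarithm. -/

theorem rpow_add_rpow_le_rpow_sub_one_mul {a b q : ℝ} (hb : 0 ≤ b) (hba : b ≤ a) (hq : 1 ≤ q) :
    a ^ q + b ^ q ≤ a ^ (q - 1) * (a + b) := by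
  have split : ∀ x : ℝ, 0 ≤ x → x ^ q = x ^ (q - 1) * x := fun x hx => by
    simpa using Real.rpow_add' hx (by linarith : q - 1 + 1 ≠ 0)
  rw [split a (hb.trans hba), split b hb, mul_add]
  gcongr

theorem rpow_add_one_sub_rpow_lt_rpow_mul {p q α : ℝ} (hp : p ∈ Set.Ico (1 / 2 : ℝ) 1)
    (hq : 1 ≤ q) (hαq : α * q < q - 1) :
    p ^ q + (1 - p) ^ q < p ^ (α * q) := by
  obtain ⟨hp_half, hp_one⟩ := hp
  calc p ^ q + (1 - p) ^ q ≤ p ^ (q - 1) * (p + (1 - p)) :=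
        rpow_add_rpow_le_rpow_sub_one_mul (by linarith) (by linarith) hq
    _ = p ^ (q - 1) := by ring
    _ < p ^ (α * q) := Real.rpow_lt_rpow_of_exponent_gt (by linarith) hp_one hαq

theorem div_add_mul_lt_sub_one {ε κ q : ℝ} (hε : 0 < ε) (hκ : 0 < κ) (hq : 1 + κ / ε < q) :
    κ / (κ + ε) * q < q - 1 := by
  have hqε : κ + ε < q * ε := by
    have := mul_lt_mul_of_pos_right hq hε
    rwa [add_mul, div_mul_cancel₀ κ hε.ne', one_mul, add_comm] at this
  rw [div_mul_eq_mul_div, div_lt_iff₀ (by positivity)]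
  nlinarith

/-- With `Q := 1 + κ/ε`, for all `p ∈ [1/2,1)` and `q > Q`:
`(p^q + (1−p)^q)^{1/q} < p^{κ/(κ+ε)}`, equivalently
`log(p^q)/log(p^q + (1−p)^q) < 1 + ε/κ`. -/
theorem stmt16 (ε κ : ℝ) (hε : 0 < ε) (hκ : 0 < κ) (p q : ℝ)
    (hp : p ∈ Set.Ico (1 / 2 : ℝ) 1) (hq : 1 + κ / ε < q) :
    (p ^ q + (1 - p) ^ q) ^ (1 / q) < p ^ (κ / (κ + ε)) ∧
    Real.log (p ^ q) / Real.log (p ^ q + (1 - p) ^ q) < 1 + ε / κ := by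
  obtain ⟨hp_half, hp_one⟩ := hp
  have hp0 : 0 < p := by linarith
  have hq1 : 1 < q := (lt_add_of_pos_right 1 (div_pos hκ hε)).trans hq
  have hα : 0 < κ / (κ + ε) := by positivity
  have hS := rpow_add_one_sub_rpow_lt_rpow_mul ⟨hp_half, hp_one⟩ hq1.le
    (div_add_mul_lt_sub_one hε hκ hq)
  have hS0 : 0 < p ^ q + (1 - p) ^ q := by positivity
  constructor
  · calc (p ^ q + (1 - p) ^ q) ^ (1 / q) < (p ^ (κ / (κ + ε) * q)) ^ (1 / q) := by gcongr
      _ = p ^ (κ / (κ + ε)) := by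
        rw [← Real.rpow_mul hp0.le]
        field_simp
  · have hlogS : Real.log (p ^ q + (1 - p) ^ q) < κ / (κ + ε) * (q * Real.log p) := by
      simpa [Real.log_rpow hp0, mul_assoc] using Real.log_lt_log hS0 hS
    have hlog_neg : κ / (κ + ε) * (q * Real.log p) < 0 :=
      mul_neg_of_pos_of_neg hα (mul_neg_of_pos_of_neg (by linarith) (Real.log_neg hp0 hp_one))
    have hinv : 1 + ε / κ = (κ / (κ + ε))⁻¹ := by
      field_simp
    rw [Real.log_rpow hp0, div_lt_iff_of_neg (hlogS.trans hlog_neg), hinv, inv_mul_lt_iff₀ hα]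
    exact hlogS
end
end
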